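/- arXiv:1901.03585 — 8 statements merged into one kernel-verified Lean document; each statement's English description precedes it below -/
import Mathlib

section
/- Suppose P_s ≥ 0 and P_r > 0. Then R(P_s, P_r) > 0 if and only if both γ_re < γ_rm and P_r·γ_re < P_s·γ_sr. (Proposition 1: positive secure rate over a subcarrier is obtained if and only if the subcarrier is allocated to the best-gain user, i.e. γ_rm > γ_re, and the relay-to-eavesdropper link is the bottleneck compared to the source-to-relay link, i.e. P_r·γ_re < P_s·γ_sr.) -/
/-- Per-subcarrier DF secure rate:
`R(P_s, P_r) = (1/2)·max(0, min(log₂(1 + P_s·γ_sr/σ²), log₂(1 + P_r·γ_rm/σ²)) − log₂(1 + P_r·γ_re/σ²))`. -/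
noncomputable def secRate (σ2 γsr γrm γre Ps Pr : ℝ) : ℝ :=
  (1 / 2) * max 0 (min (Real.logb 2 (1 + Ps * γsr / σ2)) (Real.logb 2 (1 + Pr * γrm / σ2))
    - Real.logb 2 (1 + Pr * γre / σ2))

/-- Proposition 1: for `P_s ≥ 0` and `P_r > 0`, the secure rate is positive iff
`γ_re < γ_rm` and `P_r·γ_re < P_s·γ_sr`. -/
theorem secRate_pos_iff (σ2 γsr γrm γre Ps Pr : ℝ)
    (hσ2 : 0 < σ2) (hsr : 0 < γsr) (hrm : 0 < γrm) (hre : 0 < γre)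
    (hPs : 0 ≤ Ps) (hPr : 0 < Pr) :
    0 < secRate σ2 γsr γrm γre Ps Pr ↔ (γre < γrm ∧ Pr * γre < Ps * γsr) := by
  have ha : 0 < 1 + Ps * γsr / σ2 := by positivity
  have hb : 0 < 1 + Pr * γrm / σ2 := by positivity
  have hc : 0 < 1 + Pr * γre / σ2 := by positivity
  have hlog : ∀ x y : ℝ, 0 < x → 0 < y → (Real.logb 2 x < Real.logb 2 y ↔ x < y) :=
    fun x y hx hy => Real.logb_lt_logb_iff one_lt_two hx hy
  have key : 0 < secRate σ2 γsr γrm γre Ps Pr ↔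
      Real.logb 2 (1 + Pr * γre / σ2) <
        min (Real.logb 2 (1 + Ps * γsr / σ2)) (Real.logb 2 (1 + Pr * γrm / σ2)) := by
    unfold secRate
    rw [mul_pos_iff]
    constructor
    · rintro (⟨-, h⟩ | ⟨h, -⟩)
      · rcases lt_max_iff.mp h with h' | h'
        · exact False.elim (lt_irrefl _ h')
        · linarith
      · norm_num at h
    · intro h
      left
      exact ⟨by norm_num, lt_max_of_lt_right (by linarith)⟩
  rw [key, lt_min_iff, hlog _ _ hc ha, hlog _ _ hc hb]
  have h1 : (1 + Pr * γre / σ2 < 1 + Ps * γsr / σ2) ↔ Pr * γre < Ps * γsr := by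
    rw [add_lt_add_iff_left, div_lt_div_iff_of_pos_right hσ2]
  have h2 : (1 + Pr * γre / σ2 < 1 + Pr * γrm / σ2) ↔ γre < γrm := by
    rw [add_lt_add_iff_left, div_lt_div_iff_of_pos_right hσ2,
      mul_lt_mul_iff_of_pos_left hPr]
  rw [h1, h2, and_comm]
end

section
/- Let c > 0 and define f(t,p) = (1/2)·log₂((1+t)/(1+c·p)) on the domain D = {(t,p) : t > −1, p > −1/c}. Then for all (t₁,p₁), (t₂,p₂) ∈ D: f(t₂,p₂) ≥ f(t₁,p₁) if and only if (t₂−t₁)/(1+t₁) − c·(p₂−p₁)/(1+c·p₁) ≥ 0, i.e. the gradient inequality ∇f(t₁,p₁)ᵀ((t₂,p₂)−(t₁,p₁)) ≥ 0 holds. (This is the pseudoconvexity and pseudoconcavity—pseudolinearity—of the per-subcarrier secure-rate objective asserted in Lemma 1.) -/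
/-! Both sides compare the same two ratios: `f(t₂,p₂) ≥ f(t₁,p₁)` says
`(1+t₂)/(1+c p₂) ≥ (1+t₁)/(1+c p₁)` because `logb 2` is increasing, while the gradient
expression equals `(1+t₂)/(1+t₁) − (1+c p₂)/(1+c p₁)`, and cross-multiplying by the positive
denominators turns either inequality into `(1+t₁)(1+c p₂) ≤ (1+t₂)(1+c p₁)`. -/

theorem sub_div_sub_sub_div_eq {K : Type*} [Field K] {x y u v : K} (hx : x ≠ 0) (hu : u ≠ 0) :
    (y - x) / x - (v - u) / u = y / x - v / u := by
  rw [← div_sub_one hx, ← div_sub_one hu, sub_sub_sub_cancel_right]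

section

variable {K : Type*} [Field K] [LinearOrder K] [IsStrictOrderedRing K]

theorem div_le_div_iff_div_le_div {a b a' b' : K} (ha : 0 < a) (hb : 0 < b) (hb' : 0 < b') :
    a / b ≤ a' / b' ↔ b' / b ≤ a' / a := by
  rw [div_le_div_iff₀ hb hb', div_le_div_iff₀ hb ha, mul_comm a]

theorem one_add_mul_pos_of_neg_inv_lt {c p : K} (hc : 0 < c) (hp : -(1 / c) < p) :
    0 < 1 + c * p := by
  have := mul_lt_mul_of_pos_left hp hc
  rwa [mul_neg, mul_one_div_cancel hc.ne', neg_lt_iff_pos_add'] at this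

end

/-- Pseudolinearity of the per-subcarrier secure-rate objective
`f(t,p) = (1/2)·log₂((1+t)/(1+c·p))` on `D = {(t,p) : t > −1, p > −1/c}`:
`f(t₂,p₂) ≥ f(t₁,p₁)` iff the gradient inequality
`(t₂−t₁)/(1+t₁) − c·(p₂−p₁)/(1+c·p₁) ≥ 0` holds (Lemma 1). -/
theorem pseudolinear_objective (c : ℝ) (hc : 0 < c) (t₁ p₁ t₂ p₂ : ℝ)
    (ht₁ : -1 < t₁) (hp₁ : -(1 / c) < p₁) (ht₂ : -1 < t₂) (hp₂ : -(1 / c) < p₂) :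
    (1 / 2) * Real.logb 2 ((1 + t₂) / (1 + c * p₂)) ≥
      (1 / 2) * Real.logb 2 ((1 + t₁) / (1 + c * p₁)) ↔
    (t₂ - t₁) / (1 + t₁) - c * (p₂ - p₁) / (1 + c * p₁) ≥ 0 := by
  have hT₁ : 0 < 1 + t₁ := by linarith
  have hT₂ : 0 < 1 + t₂ := by linarith
  have hP₁ := one_add_mul_pos_of_neg_inv_lt hc hp₁
  have hP₂ := one_add_mul_pos_of_neg_inv_lt hc hp₂
  have gradient_eq : (t₂ - t₁) / (1 + t₁) - c * (p₂ - p₁) / (1 + c * p₁) =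
      (1 + t₂) / (1 + t₁) - (1 + c * p₂) / (1 + c * p₁) := by
    have := sub_div_sub_sub_div_eq (y := 1 + t₂) (v := 1 + c * p₂) hT₁.ne' hP₁.ne'
    rwa [add_sub_add_left_eq_sub, add_sub_add_left_eq_sub, ← mul_sub] at this
  rw [ge_iff_le, ge_iff_le, mul_le_mul_iff_right₀ one_half_pos,
    Real.logb_le_logb one_lt_two (div_pos hT₁ hP₁) (div_pos hT₂ hP₂),
    div_le_div_iff_div_le_div hT₁ hP₁ hP₂, gradient_eq, sub_nonneg]
end

section
/- Suppose γ_re < γ_rm and fix P_r ≥ 0. Then for every P_s ≥ 0, R(P_s, P_r) ≤ (1/2)·log₂((σ² + P_r·γ_rm)/(σ² + P_r·γ_re)), with equality when P_s·γ_sr = P_r·γ_rm. (Theorem 1, source side: for fixed relay power, the maximum secure rate over a subcarrier is achieved when P_s·γ_sr = P_r·γ_rm.) -/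
/-- Theorem 1, source side: for fixed relay power `P_r ≥ 0` and `γ_re < γ_rm`,
every source power `P_s ≥ 0` gives
`R(P_s, P_r) ≤ (1/2)·log₂((σ² + P_r·γ_rm)/(σ² + P_r·γ_re))`,
with equality when `P_s·γ_sr = P_r·γ_rm`. -/
theorem secRate_le_of_fixed_relay_power (σ2 γsr γrm γre Pr : ℝ)
    (hσ2 : 0 < σ2) (hsr : 0 < γsr) (hrm : 0 < γrm) (hre : 0 < γre)
    (hgain : γre < γrm) (hPr : 0 ≤ Pr) :
    ∀ Ps : ℝ, 0 ≤ Ps →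
      secRate σ2 γsr γrm γre Ps Pr ≤
        (1 / 2) * Real.logb 2 ((σ2 + Pr * γrm) / (σ2 + Pr * γre)) ∧
      (Ps * γsr = Pr * γrm →
        secRate σ2 γsr γrm γre Ps Pr =
          (1 / 2) * Real.logb 2 ((σ2 + Pr * γrm) / (σ2 + Pr * γre))) := by
  intro Ps hPs
  have hb : (0:ℝ) < 1 + Pr * γrm / σ2 := by positivity
  have hc : (0:ℝ) < 1 + Pr * γre / σ2 := by positivity
  have hcb : 1 + Pr * γre / σ2 ≤ 1 + Pr * γrm / σ2 := by
    gcongr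
  have hlogle : Real.logb 2 (1 + Pr * γre / σ2) ≤ Real.logb 2 (1 + Pr * γrm / σ2) :=
    Real.logb_le_logb_of_le (by norm_num) hc hcb
  have hrhs : Real.logb 2 ((σ2 + Pr * γrm) / (σ2 + Pr * γre)) =
      Real.logb 2 (1 + Pr * γrm / σ2) - Real.logb 2 (1 + Pr * γre / σ2) := by
    rw [← Real.logb_div (by positivity) (by positivity)]
    congr 1
    field_simp
  constructor
  · unfold secRate
    rw [hrhs]
    gcongr
    have : min (Real.logb 2 (1 + Ps * γsr / σ2)) (Real.logb 2 (1 + Pr * γrm / σ2))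
        - Real.logb 2 (1 + Pr * γre / σ2) ≤
        Real.logb 2 (1 + Pr * γrm / σ2) - Real.logb 2 (1 + Pr * γre / σ2) := by
      gcongr
      exact min_le_right _ _
    exact max_le (by linarith) this
  · intro heq
    unfold secRate
    rw [hrhs, heq, min_self, max_eq_right (by linarith)]
end

section
/- Suppose γ_re < γ_rm and fix P_s ≥ 0. Then for every P_r ≥ 0, R(P_s, P_r) ≤ R(P_s, P_s·γ_sr/γ_rm). (Theorem 1, relay side: for fixed source power, the secure rate over a subcarrier is maximized at the relay power P_r = P_s·γ_sr/γ_rm, i.e. when P_s·γ_sr = P_r·γ_rm.) -/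
/-!
Write `f(P) = log₂(1 + P·γ_rm/σ²)` and `h(P) = log₂(1 + P·γ_re/σ²)`, so that
`R(P_s, P) = ½·max(0, min(f(P₀), f(P)) − h(P))` with `P₀ = P_s·γ_sr/γ_rm`. Both `h` and
`f − h = log₂((σ² + P·γ_rm)/(σ² + P·γ_re))` are increasing when `γ_re ≤ γ_rm`. Below `P₀` the
minimum is at most `f(P)` and `f − h` increases up to `P₀`; above `P₀` the minimum is at most
`f(P₀)` while `h` only grows.
-/

open Real Set

lemma min_sub_le_of_monotoneOn {α β : Type*} [LinearOrder α] [AddCommGroup β] [LinearOrder β]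
    [IsOrderedAddMonoid β] {s : Set α} {f h : α → β}
    (hfh : MonotoneOn (fun x => f x - h x) s) (hh : MonotoneOn h s)
    {x₀ x : α} (hx₀ : x₀ ∈ s) (hx : x ∈ s) :
    min (f x₀) (f x) - h x ≤ f x₀ - h x₀ := by
  rcases le_total x x₀ with hle | hle
  · calc min (f x₀) (f x) - h x ≤ f x - h x := by gcongr; exact min_le_right _ _
      _ ≤ f x₀ - h x₀ := hfh hx hx₀ hle
  · exact sub_le_sub (min_le_left _ _) (hh hx₀ hx hle)

lemma logb_one_add_mul_monotoneOn {c b : ℝ} (hc : 1 < c) (hb : 0 ≤ b) :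
    MonotoneOn (fun x => logb c (1 + x * b)) (Ici 0) := by
  intro x hx y _ hxy
  rw [mem_Ici] at hx
  exact logb_le_logb_of_le hc (by positivity) (by gcongr)

lemma logb_one_add_mul_sub_logb_one_add_mul_monotoneOn {c a b : ℝ} (hc : 1 < c)
    (hb : 0 ≤ b) (hba : b ≤ a) :
    MonotoneOn (fun x => logb c (1 + x * a) - logb c (1 + x * b)) (Ici 0) := by
  intro x hx y hy hxy
  rw [mem_Ici] at hx hy
  have ha : 0 ≤ a := hb.trans hba
  rw [sub_le_sub_iff, ← logb_mul (by positivity) (by positivity),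
    ← logb_mul (by positivity) (by positivity)]
  refine logb_le_logb_of_le hc (by positivity) ?_
  nlinarith [mul_nonneg (sub_nonneg.2 hba) (sub_nonneg.2 hxy)]

/-- Theorem 1, relay side: for fixed source power `P_s ≥ 0` and `γ_re < γ_rm`,
the secure rate is maximized at the relay power `P_r = P_s·γ_sr/γ_rm`, i.e.
`R(P_s, P_r) ≤ R(P_s, P_s·γ_sr/γ_rm)` for every `P_r ≥ 0`. -/
theorem secRate_le_of_fixed_source_power (σ2 γsr γrm γre Ps : ℝ)
    (hσ2 : 0 < σ2) (hsr : 0 < γsr) (hrm : 0 < γrm) (hre : 0 < γre)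
    (hgain : γre < γrm) (hPs : 0 ≤ Ps) :
    ∀ Pr : ℝ, 0 ≤ Pr →
      secRate σ2 γsr γrm γre Ps Pr ≤ secRate σ2 γsr γrm γre Ps (Ps * γsr / γrm) := by
  intro Pr hPr
  set P₀ := Ps * γsr / γrm
  have hP₀ : P₀ ∈ Ici 0 := mem_Ici.2 (by positivity)
  have hfP₀ : P₀ * γrm = Ps * γsr := div_mul_cancel₀ _ hrm.ne'
  have hfh := logb_one_add_mul_sub_logb_one_add_mul_monotoneOn one_lt_two
    (div_nonneg hre.le hσ2.le) (div_le_div_of_nonneg_right hgain.le hσ2.le)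
  have hh := logb_one_add_mul_monotoneOn one_lt_two (div_nonneg hre.le hσ2.le)
  simp only [← mul_div_assoc] at hfh hh
  have key := min_sub_le_of_monotoneOn (f := fun x => logb 2 (1 + x * γrm / σ2)) hfh hh hP₀
    (mem_Ici.2 hPr)
  simp only [hfP₀] at key
  unfold secRate
  rw [hfP₀, min_self]
  gcongr
end

section
/- Suppose γ_re < γ_rm and let P_S, P_R > 0 be power budgets. Set P_r* = min(P_R, P_S·γ_sr/γ_rm) and P_s* = min(P_S, P_R·γ_rm/γ_sr). Then P_s*·γ_sr = P_r*·γ_rm, the pair (P_s*, P_r*) is feasible (P_s* ≤ P_S, P_r* ≤ P_R), and for all 0 ≤ P_s ≤ P_S and 0 ≤ P_r ≤ P_R one has R(P_s, P_r) ≤ R(P_s*, P_r*) = (1/2)·log₂((σ² + P_r*·γ_rm)/(σ² + P_r*·γ_re)). (Theorem 1: the per-subcarrier maximum under individual power budgets is attained at the equal-rate point P_s·γ_sr = P_r·γ_rm.) -/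
/-- Monotonicity of `t ↦ log₂(1+tA) - log₂(1+tB)` for `0 ≤ B ≤ A`. -/
lemma logb_diff_mono (A B : ℝ) (hB : 0 ≤ B) (hAB : B ≤ A) {t₁ t₂ : ℝ}
    (h0 : 0 ≤ t₁) (h : t₁ ≤ t₂) :
    Real.logb 2 (1 + t₁ * A) - Real.logb 2 (1 + t₁ * B) ≤
      Real.logb 2 (1 + t₂ * A) - Real.logb 2 (1 + t₂ * B) := by
  have h0' : 0 ≤ t₂ := h0.trans h
  have hA : 0 ≤ A := hB.trans hAB
  have p1 : (0:ℝ) < 1 + t₁ * A := by nlinarith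
  have p2 : (0:ℝ) < 1 + t₁ * B := by nlinarith
  have p3 : (0:ℝ) < 1 + t₂ * A := by nlinarith
  have p4 : (0:ℝ) < 1 + t₂ * B := by nlinarith
  rw [sub_le_sub_iff, ← Real.logb_mul p1.ne' p4.ne', ← Real.logb_mul p3.ne' p2.ne']
  apply Real.logb_le_logb_of_le one_lt_two (by positivity)
  nlinarith [mul_nonneg (sub_nonneg.2 h) (sub_nonneg.2 hAB)]

/-- Theorem 1: under individual power budgets `P_S, P_R > 0`, the per-subcarrier
maximum secure rate is attained at the equal-rate point
`P_s* = min(P_S, P_R·γ_rm/γ_sr)`, `P_r* = min(P_R, P_S·γ_sr/γ_rm)` with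
`P_s*·γ_sr = P_r*·γ_rm`, and equals
`(1/2)·log₂((σ² + P_r*·γ_rm)/(σ² + P_r*·γ_re))`. -/
theorem secRate_max_under_budgets (σ2 γsr γrm γre PS PR : ℝ)
    (hσ2 : 0 < σ2) (hsr : 0 < γsr) (hrm : 0 < γrm) (hre : 0 < γre)
    (hgain : γre < γrm) (hPS : 0 < PS) (hPR : 0 < PR) :
    let Prstar : ℝ := min PR (PS * γsr / γrm)
    let Psstar : ℝ := min PS (PR * γrm / γsr)
    Psstar * γsr = Prstar * γrm ∧ Psstar ≤ PS ∧ Prstar ≤ PR ∧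
    (∀ Ps Pr : ℝ, 0 ≤ Ps → Ps ≤ PS → 0 ≤ Pr → Pr ≤ PR →
      secRate σ2 γsr γrm γre Ps Pr ≤ secRate σ2 γsr γrm γre Psstar Prstar) ∧
    secRate σ2 γsr γrm γre Psstar Prstar =
      (1 / 2) * Real.logb 2 ((σ2 + Prstar * γrm) / (σ2 + Prstar * γre)) := by
  intro Prstar Psstar
  have hPr0 : 0 < Prstar := lt_min hPR (by positivity)
  have hPs0 : 0 < Psstar := lt_min hPS (by positivity)
  -- equal-rate identity
  have heq : Psstar * γsr = Prstar * γrm := by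
    rcases le_total (PR * γrm) (PS * γsr) with h | h
    · have h1 : Prstar = PR := min_eq_left (by rw [le_div_iff₀ hrm]; linarith)
      have h2 : Psstar = PR * γrm / γsr := min_eq_right (by rw [div_le_iff₀ hsr]; linarith)
      rw [h1, h2]; field_simp
    · have h1 : Prstar = PS * γsr / γrm := min_eq_right (by rw [div_le_iff₀ hrm]; linarith)
      have h2 : Psstar = PS := min_eq_left (by rw [le_div_iff₀ hsr]; linarith)
      rw [h1, h2]; field_simp
  -- positivity facts
  have pstar_rm : (0:ℝ) < 1 + Prstar * γrm / σ2 := by positivity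
  have pstar_re : (0:ℝ) < 1 + Prstar * γre / σ2 := by positivity
  -- min collapses at the star point
  have hmin : min (Real.logb 2 (1 + Psstar * γsr / σ2)) (Real.logb 2 (1 + Prstar * γrm / σ2))
      = Real.logb 2 (1 + Prstar * γrm / σ2) := by
    rw [heq, min_self]
  -- the star difference is nonnegative
  have hdiff_nn : 0 ≤ Real.logb 2 (1 + Prstar * γrm / σ2) - Real.logb 2 (1 + Prstar * γre / σ2) := by
    have : Real.logb 2 (1 + Prstar * γre / σ2) ≤ Real.logb 2 (1 + Prstar * γrm / σ2) := by
      apply Real.logb_le_logb_of_le one_lt_two pstar_re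
      have : Prstar * γre ≤ Prstar * γrm := by nlinarith
      gcongr
    linarith
  -- value of secRate at the star point
  have hstar : secRate σ2 γsr γrm γre Psstar Prstar
      = (1 / 2) * (Real.logb 2 (1 + Prstar * γrm / σ2) - Real.logb 2 (1 + Prstar * γre / σ2)) := by
    unfold secRate
    rw [hmin, max_eq_right hdiff_nn]
  refine ⟨heq, min_le_left _ _, min_le_left _ _, ?_, ?_⟩
  · -- maximality
    intro Ps Pr hPs hPsS hPr hPrR
    set m : ℝ := min Pr Prstar with hm
    have hm0 : 0 ≤ m := le_min hPr hPr0.le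
    have hmPr : m ≤ Pr := min_le_left _ _
    have hmStar : m ≤ Prstar := min_le_right _ _
    have pm_rm : (0:ℝ) < 1 + m * γrm / σ2 := by positivity
    have pm_re : (0:ℝ) < 1 + m * γre / σ2 := by positivity
    have pp_sr : (0:ℝ) < 1 + Ps * γsr / σ2 := by positivity
    have pp_rm : (0:ℝ) < 1 + Pr * γrm / σ2 := by positivity
    have pp_re : (0:ℝ) < 1 + Pr * γre / σ2 := by positivity
    -- min(Ps γsr, Pr γrm) ≤ m γrm
    have hkey : min (Ps * γsr) (Pr * γrm) ≤ m * γrm := by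
      have hstar_rm : Prstar * γrm = min (PR * γrm) (PS * γsr) := by
        rw [show Prstar = min PR (PS * γsr / γrm) from rfl, min_mul_of_nonneg _ _ hrm.le,
          div_mul_cancel₀ _ hrm.ne']
      have h1 : min (Ps * γsr) (Pr * γrm) ≤ Prstar * γrm := by
        rw [hstar_rm]
        exact le_min ((min_le_right _ _).trans (by nlinarith))
          ((min_le_left _ _).trans (by nlinarith))
      have h2 : min (Ps * γsr) (Pr * γrm) ≤ Pr * γrm := min_le_right _ _
      rw [hm, min_mul_of_nonneg _ _ hrm.le]
      exact le_min h2 h1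
    -- chain of inequalities
    have step1 : min (Real.logb 2 (1 + Ps * γsr / σ2)) (Real.logb 2 (1 + Pr * γrm / σ2))
        ≤ Real.logb 2 (1 + m * γrm / σ2) := by
      rcases le_total (Ps * γsr) (Pr * γrm) with hc | hc
      · refine (min_le_left _ _).trans ?_
        apply Real.logb_le_logb_of_le one_lt_two pp_sr
        have : Ps * γsr ≤ m * γrm := by simpa [min_eq_left hc] using hkey
        gcongr
      · refine (min_le_right _ _).trans ?_
        apply Real.logb_le_logb_of_le one_lt_two pp_rm
        have : Pr * γrm ≤ m * γrm := by simpa [min_eq_right hc] using hkey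
        gcongr
    have step2 : Real.logb 2 (1 + m * γre / σ2) ≤ Real.logb 2 (1 + Pr * γre / σ2) := by
      apply Real.logb_le_logb_of_le one_lt_two pm_re
      have : m * γre ≤ Pr * γre := by nlinarith
      gcongr
    have step3 : Real.logb 2 (1 + m * γrm / σ2) - Real.logb 2 (1 + m * γre / σ2)
        ≤ Real.logb 2 (1 + Prstar * γrm / σ2) - Real.logb 2 (1 + Prstar * γre / σ2) := by
      have := logb_diff_mono (γrm / σ2) (γre / σ2) (by positivity)
        (by gcongr) hm0 hmStar
      simpa [mul_div_assoc] using this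
    rw [hstar]
    unfold secRate
    have : min (Real.logb 2 (1 + Ps * γsr / σ2)) (Real.logb 2 (1 + Pr * γrm / σ2))
        - Real.logb 2 (1 + Pr * γre / σ2)
        ≤ Real.logb 2 (1 + Prstar * γrm / σ2) - Real.logb 2 (1 + Prstar * γre / σ2) := by
      linarith
    have hmax : max 0 (min (Real.logb 2 (1 + Ps * γsr / σ2)) (Real.logb 2 (1 + Pr * γrm / σ2))
        - Real.logb 2 (1 + Pr * γre / σ2))
        ≤ Real.logb 2 (1 + Prstar * γrm / σ2) - Real.logb 2 (1 + Prstar * γre / σ2) :=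
      max_le hdiff_nn this
    linarith
  · -- closed form
    rw [hstar, ← Real.logb_div pstar_rm.ne' pstar_re.ne']
    congr 2
    field_simp
end

section
/- Suppose γ_re < γ_rm, P_s > 0, and P_s·γ_sr < P_r·γ_rm (the source-to-relay link is the bottleneck). Then R(P_s, P_s·γ_sr/γ_rm) > R(P_s, P_r); that is, strictly reducing the relay power to P_r' = P_s·γ_sr/γ_rm < P_r strictly increases the secure rate, so no point with P_s·γ_sr < P_r·γ_rm can be optimal (infeasibility of Case 1 in the proof of Theorem 1). -/
/-- Infeasibility of Case 1 in the proof of Theorem 1: if the source-to-relay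
link is the bottleneck, `P_s·γ_sr < P_r·γ_rm` (with `P_s > 0`, `γ_re < γ_rm`),
then strictly reducing the relay power to `P_r' = P_s·γ_sr/γ_rm` strictly
increases the secure rate: `R(P_s, P_s·γ_sr/γ_rm) > R(P_s, P_r)`. -/
theorem case1_infeasible (σ2 γsr γrm γre Ps Pr : ℝ)
    (hσ2 : 0 < σ2) (hsr : 0 < γsr) (hrm : 0 < γrm) (hre : 0 < γre)
    (hgain : γre < γrm) (hPs : 0 < Ps) (hbottleneck : Ps * γsr < Pr * γrm) :
    secRate σ2 γsr γrm γre Ps (Ps * γsr / γrm) > secRate σ2 γsr γrm γre Ps Pr := by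
  have hPr'mul : Ps * γsr / γrm * γrm = Ps * γsr := div_mul_cancel₀ _ (ne_of_gt hrm)
  have hPsr : 0 < Ps * γsr := by positivity
  have hPrpos : 0 < Pr := by nlinarith
  have h1b : (1:ℝ) < 2 := one_lt_two
  unfold secRate
  rw [hPr'mul, min_self]
  set A := Real.logb 2 (1 + Ps * γsr / σ2) with hA
  -- new eavesdropper term
  have hEnew_lt_A : Real.logb 2 (1 + Ps * γsr / γrm * γre / σ2) < A := by
    apply Real.logb_lt_logb h1b (by positivity)
    have : Ps * γsr / γrm * γre < Ps * γsr := by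
      have := (div_pos hPsr hrm)
      calc Ps * γsr / γrm * γre < Ps * γsr / γrm * γrm := by
            exact mul_lt_mul_of_pos_left hgain this
        _ = Ps * γsr := hPr'mul
    gcongr
  have hnewpos : 0 < A - Real.logb 2 (1 + Ps * γsr / γrm * γre / σ2) := by linarith
  -- old eavesdropper term bigger
  have hPr'ltPr : Ps * γsr / γrm < Pr := by
    rw [div_lt_iff₀ hrm]; exact hbottleneck
  have hEold : Real.logb 2 (1 + Ps * γsr / γrm * γre / σ2)
      < Real.logb 2 (1 + Pr * γre / σ2) := by
    apply Real.logb_lt_logb h1b (by positivity)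
    gcongr
  -- min on old side is A
  have hminA : min A (Real.logb 2 (1 + Pr * γrm / σ2)) = A := by
    apply min_eq_left
    apply le_of_lt
    apply Real.logb_lt_logb h1b (by positivity)
    gcongr
  rw [hminA, max_eq_right (le_of_lt hnewpos)]
  have hlt : max 0 (A - Real.logb 2 (1 + Pr * γre / σ2))
      < A - Real.logb 2 (1 + Ps * γsr / γrm * γre / σ2) := by
    apply max_lt hnewpos
    linarith
  linarith
end

section
/- Suppose γ_rm > γ_re > 0 and σ² > 0. Then the function g(P) = (1/2)·log₂((σ² + P·γ_rm)/(σ² + P·γ_re)) is strictly concave on [0, ∞). (Remark 1: at the KKT point, the per-subcarrier secure rate is concave increasing in the relay power.) -/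
/-!
Writing `u = σ² + P γ_rm` and `v = σ² + P γ_re`, the derivative of `log (u / v)` is
`γ_rm / u - γ_re / v = σ² (γ_rm - γ_re) / (u v)`. The numerator is a positive constant and the
denominator `u v` is positive and strictly increasing in `P ≥ 0`, so the derivative is strictly
decreasing and `log (u / v)` is strictly concave; `g` is a positive multiple of it.
-/

open Real Set

theorem StrictConcaveOn.const_mul {E : Type*} [AddCommGroup E] [Module ℝ E] {s : Set E}
    {f : E → ℝ} {c : ℝ} (hf : StrictConcaveOn ℝ s f) (hc : 0 < c) :
    StrictConcaveOn ℝ s fun x => c * f x := by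
  refine ⟨hf.1, fun x hx y hy hxy a b ha hb hab => ?_⟩
  have h := mul_lt_mul_of_pos_left (hf.2 hx hy hxy ha hb hab) hc
  simp only [smul_eq_mul] at h ⊢
  linarith

section LogRatioOfAffine

variable {σ a b : ℝ}

theorem hasDerivAt_log_div_affine {P : ℝ} (hu : 0 < σ + P * a) (hv : 0 < σ + P * b) :
    HasDerivAt (fun x => log ((σ + x * a) / (σ + x * b)))
      (σ * (a - b) / ((σ + P * a) * (σ + P * b))) P := by
  have hnum : HasDerivAt (fun x => σ + x * a) a P := by
    simpa using ((hasDerivAt_id P).mul_const a).const_add σ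
  have hden : HasDerivAt (fun x => σ + x * b) b P := by
    simpa using ((hasDerivAt_id P).mul_const b).const_add σ
  refine ((hnum.div hden hv.ne').log (div_pos hu hv).ne').congr_deriv ?_
  simp only [Pi.div_apply]
  field_simp
  ring

theorem strictMonoOn_mul_affine (hσ : 0 < σ) (ha : 0 < a) (hb : 0 ≤ b) :
    StrictMonoOn (fun x => (σ + x * a) * (σ + x * b)) (Ici 0) := by
  intro x (hx : 0 ≤ x) y (hy : 0 ≤ y) hxy
  have hnum : σ + x * a < σ + y * a := by gcongr
  have hden : σ + x * b ≤ σ + y * b := by gcongr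
  exact mul_lt_mul hnum hden (by positivity) (by positivity)

theorem strictConcaveOn_log_div_affine (hσ : 0 < σ) (hb : 0 ≤ b) (hba : b < a) :
    StrictConcaveOn ℝ (Ici 0) fun x => log ((σ + x * a) / (σ + x * b)) := by
  have ha : 0 < a := hb.trans_lt hba
  have hderiv : ∀ x ∈ Ici (0 : ℝ), HasDerivAt (fun x => log ((σ + x * a) / (σ + x * b)))
      (σ * (a - b) / ((σ + x * a) * (σ + x * b))) x := fun x (hx : 0 ≤ x) =>
    hasDerivAt_log_div_affine (by positivity) (by positivity)
  refine StrictAntiOn.strictConcaveOn_of_deriv (convex_Ici 0)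
    (fun x hx => (hderiv x hx).continuousAt.continuousWithinAt) ?_
  rw [interior_Ici]
  intro x (hx : 0 < x) y (hy : 0 < y) hxy
  rw [(hderiv x hx.le).deriv, (hderiv y hy.le).deriv]
  have hmono := strictMonoOn_mul_affine hσ ha hb (mem_Ici.2 hx.le) (mem_Ici.2 hy.le) hxy
  exact div_lt_div_of_pos_left (mul_pos hσ (sub_pos.2 hba)) (by positivity) hmono

end LogRatioOfAffine

/-- Remark 1: the per-subcarrier secure rate at the equal-rate KKT point,
`g(P) = (1/2)·log₂((σ² + P·γ_rm)/(σ² + P·γ_re))`, is strictly concave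
on `[0, ∞)` when `γ_rm > γ_re > 0` and `σ² > 0`. -/
theorem secure_rate_strictConcaveOn (γrm γre σ2 : ℝ)
    (hre : 0 < γre) (hgain : γre < γrm) (hσ2 : 0 < σ2) :
    StrictConcaveOn ℝ (Set.Ici (0 : ℝ))
      (fun P : ℝ => (1 / 2) * Real.logb 2 ((σ2 + P * γrm) / (σ2 + P * γre))) := by
  have hlogb : (fun P : ℝ => (1 / 2) * logb 2 ((σ2 + P * γrm) / (σ2 + P * γre))) =
      fun P => (2 * log 2)⁻¹ * log ((σ2 + P * γrm) / (σ2 + P * γre)) := by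
    funext P
    rw [logb]
    ring
  rw [hlogb]
  exact (strictConcaveOn_log_div_affine hσ2 hre.le hgain).const_mul (by positivity)
end

section
/- Let γ_sr, γ_rm, γ_re, σ² > 0, λ ≥ 0, and P > 0, and set x = σ²/γ_sr, t = P·γ_rm/σ², and y = λ/(2(1+t)) − x (from the stationarity conditions ∂L/∂P_s = 1 − x·γ_sr/σ² = 0 and ∂L/∂t = x + y − λ/(2(1+t)) = 0 with multiplier z = 0). Then the remaining stationarity condition 1 + λ·γ_re/(2(σ² + P·γ_re)) − y·γ_rm/σ² = 0 holds if and only if γ_rm·γ_re·P² + (γ_rm+γ_re)·σ²·P + σ⁴ = λ·σ²·γ_sr·(γ_rm − γ_re)/(2(γ_sr + γ_rm)); i.e., the KKT system of the per-user power minimization problem Q1 in Case 3 reduces to the quadratic in P with Δ_k = λ·σ²·γ_sr·(γ_rm − γ_re)/(2(γ_sr + γ_rm)). -/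
/-- Case 3 of the KKT system of the per-user power minimization problem Q1:
with `x = σ²/γ_sr`, `t = P·γ_rm/σ²`, and `y = λ/(2(1+t)) − x` (from the
stationarity conditions with multiplier `z = 0`), the remaining stationarity
condition `1 + λ·γ_re/(2(σ² + P·γ_re)) − y·γ_rm/σ² = 0` holds iff
`γ_rm·γ_re·P² + (γ_rm+γ_re)·σ²·P + σ⁴ = λ·σ²·γ_sr·(γ_rm − γ_re)/(2(γ_sr + γ_rm))`. -/
theorem Q1_stationarity_iff_quadratic (γsr γrm γre σ2 lam P : ℝ)
    (hsr : 0 < γsr) (hrm : 0 < γrm) (hre : 0 < γre) (hσ2 : 0 < σ2)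
    (hlam : 0 ≤ lam) (hP : 0 < P)
    (x t y : ℝ) (hx : x = σ2 / γsr) (ht : t = P * γrm / σ2)
    (hy : y = lam / (2 * (1 + t)) - x) :
    (1 + lam * γre / (2 * (σ2 + P * γre)) - y * γrm / σ2 = 0) ↔
      (γrm * γre * P ^ 2 + (γrm + γre) * σ2 * P + σ2 ^ 2 =
        lam * σ2 * γsr * (γrm - γre) / (2 * (γsr + γrm))) := by
  subst hx ht hy
  have h1 : (0:ℝ) < σ2 + P * γre := by positivity
  have h2 : (0:ℝ) < σ2 + P * γrm := by positivity
  have h3 : (0:ℝ) < 1 + P * γrm / σ2 := by positivity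
  have h4 : (0:ℝ) < γsr + γrm := by positivity
  field_simp
  constructor <;> intro h <;> nlinarith [h, sq_nonneg P, mul_pos h1 h2]
end
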